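/- arXiv:2110.12725 — 2 statements merged into one kernel-verified Lean document; each statement's English description precedes it below -/
import Mathlib

section
/- Chordal metric perturbation bound for a generalized eigenvalue: let t, r, t̃, r̃ ∈ ℂ with |t̃ - t| ≤ τ and |r̃ - r| ≤ ρ, and suppose |t|² + |r|² - 2(|t|τ + |r|ρ) > 0. Then the chordal distance 𝒳(⟨t,r⟩, ⟨t̃,r̃⟩) = |t r̃ - r t̃| / (√(|t|²+|r|²) √(|t̃|²+|r̃|²)) satisfies 𝒳(⟨t,r⟩, ⟨t̃,r̃⟩) ≤ (|t|ρ + |r|τ) / (√(|t|²+|r|²) √(|t|²+|r|² - 2(|t|τ + |r|ρ))). -/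
/-!
The numerator is controlled by writing `t r̃ - r t̃ = t (r̃ - r) - r (t̃ - t)`. For the
denominator, `|t̃| ≥ |t| - τ` gives `|t̃|² ≥ |t|² - 2|t|τ` (trivially so when `|t| < 2τ`), and
likewise for `r̃`, so `|t̃|² + |r̃|²` is bounded below by the positive quantity in the hypothesis.
-/

theorem norm_mul_sub_mul_le_of_norm_sub_le {R : Type*} [SeminormedCommRing R]
    {t r t' r' : R} {τ ρ : ℝ} (ht : ‖t' - t‖ ≤ τ) (hr : ‖r' - r‖ ≤ ρ) :
    ‖t * r' - r * t'‖ ≤ ‖t‖ * ρ + ‖r‖ * τ :=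
  calc ‖t * r' - r * t'‖ = ‖t * (r' - r) - r * (t' - t)‖ := by ring_nf
    _ ≤ ‖t * (r' - r)‖ + ‖r * (t' - t)‖ := norm_sub_le _ _
    _ ≤ ‖t‖ * ‖r' - r‖ + ‖r‖ * ‖t' - t‖ := add_le_add (norm_mul_le _ _) (norm_mul_le _ _)
    _ ≤ ‖t‖ * ρ + ‖r‖ * τ := by gcongr

theorem sq_norm_sub_two_mul_le_sq_norm {E : Type*} [SeminormedAddCommGroup E]
    {x y : E} {τ : ℝ} (h : ‖y - x‖ ≤ τ) :
    ‖x‖ ^ 2 - 2 * (‖x‖ * τ) ≤ ‖y‖ ^ 2 := by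
  have hy : ‖x‖ - τ ≤ ‖y‖ := by
    linarith [norm_sub_norm_le x y, norm_sub_rev x y]
  have hx := norm_nonneg x
  rcases le_or_gt τ ‖x‖ with hτ | hτ
  · nlinarith [sq_nonneg τ]
  · nlinarith [norm_nonneg y]

theorem stmt12_general (t r t' r' : ℂ) (τ ρ : ℝ)
    (ht : ‖t' - t‖ ≤ τ) (hr : ‖r' - r‖ ≤ ρ)
    (hpos : ‖t‖ ^ 2 + ‖r‖ ^ 2 -
      2 * (‖t‖ * τ + ‖r‖ * ρ) > 0) :
    ‖t * r' - r * t'‖ /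
        (Real.sqrt (‖t‖ ^ 2 + ‖r‖ ^ 2) *
          Real.sqrt (‖t'‖ ^ 2 + ‖r'‖ ^ 2)) ≤
      (‖t‖ * ρ + ‖r‖ * τ) /
        (Real.sqrt (‖t‖ ^ 2 + ‖r‖ ^ 2) *
          Real.sqrt (‖t‖ ^ 2 + ‖r‖ ^ 2 -
            2 * (‖t‖ * τ + ‖r‖ * ρ))) := by
  have hnum := norm_mul_sub_mul_le_of_norm_sub_le ht hr
  have hden : ‖t‖ ^ 2 + ‖r‖ ^ 2 - 2 * (‖t‖ * τ + ‖r‖ * ρ) ≤ ‖t'‖ ^ 2 + ‖r'‖ ^ 2 := by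
    linarith [sq_norm_sub_two_mul_le_sq_norm ht, sq_norm_sub_two_mul_le_sq_norm hr]
  apply div_le_div₀ ((norm_nonneg _).trans hnum) hnum
  · have hτ : 0 ≤ ‖t‖ * τ := mul_nonneg (norm_nonneg t) ((norm_nonneg _).trans ht)
    have hρ : 0 ≤ ‖r‖ * ρ := mul_nonneg (norm_nonneg r) ((norm_nonneg _).trans hr)
    exact mul_pos (Real.sqrt_pos.mpr (by linarith)) (Real.sqrt_pos.mpr hpos)
  · exact mul_le_mul_of_nonneg_left (Real.sqrt_le_sqrt hden) (Real.sqrt_nonneg _)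

theorem stmt12 (t r t' r' : ℂ) (τ ρ : ℝ)
    (h0 : (t, r) ≠ (0, 0)) (h0' : (t', r') ≠ (0, 0))
    (ht : ‖t' - t‖ ≤ τ) (hr : ‖r' - r‖ ≤ ρ)
    (hpos : ‖t‖ ^ 2 + ‖r‖ ^ 2 -
      2 * (‖t‖ * τ + ‖r‖ * ρ) > 0) :
    ‖t * r' - r * t'‖ /
        (Real.sqrt (‖t‖ ^ 2 + ‖r‖ ^ 2) *
          Real.sqrt (‖t'‖ ^ 2 + ‖r'‖ ^ 2)) ≤
      (‖t‖ * ρ + ‖r‖ * τ) /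
        (Real.sqrt (‖t‖ ^ 2 + ‖r‖ ^ 2) *
          Real.sqrt (‖t‖ ^ 2 + ‖r‖ ^ 2 -
            2 * (‖t‖ * τ + ‖r‖ * ρ))) :=
  stmt12_general t r t' r' τ ρ ht hr hpos
end

section
/- Let T, R be n×n upper triangular complex matrices such that for each i the pair (t_{ii}, r_{ii}) ≠ (0,0) and the generalized eigenvalues t_{ii}/r_{ii} are pairwise distinct (as points of the projective line). Then the 2ν×2ν matrix L = [[-L_{T,X}, L_{T,Y}], [-L_{R,X}, L_{R,Y}]], where ν = n(n-1)/2, L_{T,X} = M_slvec (Tᵀ ⊗ I_n) M_slvecᵀ, L_{T,Y} = M_slvec (I_n ⊗ T) M_slvecᵀ, and similarly for R, is nonsingular. -/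
open Matrix Kronecker

/-- Index set for the strictly lower triangular entries under column-stacking `vec`:
a pair `(j, i)` with column `j` strictly less than row `i`. -/
abbrev LowIdx (n : ℕ) := {p : Fin n × Fin n // (p.1 : ℕ) < (p.2 : ℕ)}

/-- The selection matrix `M_slvec` extracting the strictly lower triangular entries from
the column-stacked vectorization (indexed by pairs `(column, row)`). -/
def Mslvec (n : ℕ) : Matrix (LowIdx n) (Fin n × Fin n) ℂ :=
  fun q p => if q.1 = p then 1 else 0

lemma Mslvec_sandwich {n : ℕ} (M : Matrix (Fin n × Fin n) (Fin n × Fin n) ℂ)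
    (q p : LowIdx n) :
    (Mslvec n * M * (Mslvec n)ᵀ) q p = M q.1 p.1 := by
  simp [Matrix.mul_apply, Mslvec, Matrix.transpose_apply, ite_mul, mul_ite]

lemma sum_lowIdx {n : ℕ} (f : Fin n × Fin n → ℂ)
    (hf : ∀ r : Fin n × Fin n, ¬ ((r.1 : ℕ) < (r.2 : ℕ)) → f r = 0) :
    (∑ p : LowIdx n, f p.1) = ∑ r : Fin n × Fin n, f r := by
  rw [← Finset.sum_subtype
      (Finset.univ.filter fun r : Fin n × Fin n => (r.1 : ℕ) < (r.2 : ℕ)) (by simp) f]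
  exact Finset.sum_subset (Finset.filter_subset _ _) (fun r _ hr => hf r (by simpa using hr))

theorem stmt17 {n : ℕ} (T R : Matrix (Fin n) (Fin n) ℂ)
    (hT : ∀ i j : Fin n, j < i → T i j = 0)
    (hR : ∀ i j : Fin n, j < i → R i j = 0)
    (hreg : ∀ i : Fin n, (T i i, R i i) ≠ (0, 0))
    (hdist : ∀ i j : Fin n, i ≠ j → T i i * R j j ≠ T j j * R i i) :
    IsUnit
      (Matrix.fromBlocks
        (-(Mslvec n * (Tᵀ ⊗ₖ (1 : Matrix (Fin n) (Fin n) ℂ)) * (Mslvec n)ᵀ))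
        (Mslvec n * ((1 : Matrix (Fin n) (Fin n) ℂ) ⊗ₖ T) * (Mslvec n)ᵀ)
        (-(Mslvec n * (Rᵀ ⊗ₖ (1 : Matrix (Fin n) (Fin n) ℂ)) * (Mslvec n)ᵀ))
        (Mslvec n * ((1 : Matrix (Fin n) (Fin n) ℂ) ⊗ₖ R) * (Mslvec n)ᵀ)) := by
  rw [Matrix.isUnit_iff_isUnit_det, isUnit_iff_ne_zero]
  intro hdet
  obtain ⟨v, hv0, hv⟩ := Matrix.exists_mulVec_eq_zero_iff.2 hdet
  -- The strictly lower triangular matrices encoded by `v`.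
  set X : Matrix (Fin n) (Fin n) ℂ :=
    fun i j => if h : (j : ℕ) < (i : ℕ) then v (Sum.inl ⟨(j, i), h⟩) else 0 with hX
  set Y : Matrix (Fin n) (Fin n) ℂ :=
    fun i j => if h : (j : ℕ) < (i : ℕ) then v (Sum.inr ⟨(j, i), h⟩) else 0 with hY
  have hXv : ∀ p : LowIdx n, v (Sum.inl p) = X p.1.2 p.1.1 := by
    rintro ⟨⟨a, b⟩, hab⟩; simp only [hX]; rw [dif_pos (show ((a : ℕ) < (b : ℕ)) from hab)]
  have hYv : ∀ p : LowIdx n, v (Sum.inr p) = Y p.1.2 p.1.1 := by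
    rintro ⟨⟨a, b⟩, hab⟩; simp only [hY]; rw [dif_pos (show ((a : ℕ) < (b : ℕ)) from hab)]
  -- The two families of scalar equations.
  have master : ∀ (S : Matrix (Fin n) (Fin n) ℂ) (q : LowIdx n),
      (∑ p : LowIdx n,
        (-(Mslvec n * (Sᵀ ⊗ₖ (1 : Matrix (Fin n) (Fin n) ℂ)) * (Mslvec n)ᵀ)) q p *
          v (Sum.inl p)
        + ∑ p : LowIdx n,
        (Mslvec n * ((1 : Matrix (Fin n) (Fin n) ℂ) ⊗ₖ S) * (Mslvec n)ᵀ) q p *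
          v (Sum.inr p)) = 0 →
      ∑ l, S l q.1.1 * X q.1.2 l = ∑ k, S q.1.2 k * Y k q.1.1 := by
    intro S q h0
    have eA : ∑ p : LowIdx n,
        (Mslvec n * (Sᵀ ⊗ₖ (1 : Matrix (Fin n) (Fin n) ℂ)) * (Mslvec n)ᵀ) q p *
          v (Sum.inl p)
        = ∑ l, S l q.1.1 * X q.1.2 l := by
      have h1 : ∀ p : LowIdx n,
          (Mslvec n * (Sᵀ ⊗ₖ (1 : Matrix (Fin n) (Fin n) ℂ)) * (Mslvec n)ᵀ) q p *
            v (Sum.inl p)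
          = (fun r : Fin n × Fin n =>
              (Sᵀ ⊗ₖ (1 : Matrix (Fin n) (Fin n) ℂ)) q.1 r * X r.2 r.1) p.1 :=
        fun p => by simp only [Mslvec_sandwich, hXv]
      rw [Finset.sum_congr rfl fun p _ => h1 p]
      refine (sum_lowIdx
          (fun r : Fin n × Fin n =>
            (Sᵀ ⊗ₖ (1 : Matrix (Fin n) (Fin n) ℂ)) q.1 r * X r.2 r.1)
          (fun r hr => by simp only [hX]; rw [dif_neg hr, mul_zero])).trans ?_
      rw [Fintype.sum_prod_type]
      refine Finset.sum_congr rfl fun l _ => ?_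
      simp [Matrix.kroneckerMap_apply, Matrix.one_apply, ite_mul, mul_ite,
        Finset.sum_ite_eq, mul_comm]
    have eB : ∑ p : LowIdx n,
        (Mslvec n * ((1 : Matrix (Fin n) (Fin n) ℂ) ⊗ₖ S) * (Mslvec n)ᵀ) q p *
          v (Sum.inr p)
        = ∑ k, S q.1.2 k * Y k q.1.1 := by
      have h1 : ∀ p : LowIdx n,
          (Mslvec n * ((1 : Matrix (Fin n) (Fin n) ℂ) ⊗ₖ S) * (Mslvec n)ᵀ) q p *
            v (Sum.inr p)
          = (fun r : Fin n × Fin n =>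
              ((1 : Matrix (Fin n) (Fin n) ℂ) ⊗ₖ S) q.1 r * Y r.2 r.1) p.1 :=
        fun p => by simp only [Mslvec_sandwich, hYv]
      rw [Finset.sum_congr rfl fun p _ => h1 p]
      refine (sum_lowIdx
          (fun r : Fin n × Fin n =>
            ((1 : Matrix (Fin n) (Fin n) ℂ) ⊗ₖ S) q.1 r * Y r.2 r.1)
          (fun r hr => by simp only [hY]; rw [dif_neg hr, mul_zero])).trans ?_
      rw [Fintype.sum_prod_type]
      simp [Matrix.kroneckerMap_apply, Matrix.one_apply, ite_mul, mul_ite,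
        Finset.sum_ite_eq, mul_comm]
    simp only [Matrix.neg_apply, neg_mul] at h0
    rw [Finset.sum_neg_distrib, eA, eB] at h0
    linear_combination -h0
  have eqT : ∀ q : LowIdx n,
      ∑ l, T l q.1.1 * X q.1.2 l = ∑ k, T q.1.2 k * Y k q.1.1 := by
    intro q
    apply master T q
    have h0 := congrFun hv (Sum.inl q)
    simpa [Matrix.mulVec, dotProduct, Fintype.sum_sum_type, Matrix.fromBlocks] using h0
  have eqR : ∀ q : LowIdx n,
      ∑ l, R l q.1.1 * X q.1.2 l = ∑ k, R q.1.2 k * Y k q.1.1 := by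
    intro q
    apply master R q
    have h0 := congrFun hv (Sum.inr q)
    simpa [Matrix.mulVec, dotProduct, Fintype.sum_sum_type, Matrix.fromBlocks] using h0
  -- Main induction on the measure (n - 1 - i) + j.
  have key : ∀ m : ℕ, ∀ i j : Fin n, (j : ℕ) < (i : ℕ) →
      (n - 1 - (i : ℕ)) + (j : ℕ) = m → X i j = 0 ∧ Y i j = 0 := by
    intro m
    induction m using Nat.strong_induction_on with
    | _ m IH =>
      intro i j hji hm
      have e1 := eqT ⟨(j, i), hji⟩
      have e2 := eqR ⟨(j, i), hji⟩
      simp only at e1 e2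
      have collapseL : ∀ S : Matrix (Fin n) (Fin n) ℂ, (∀ a b : Fin n, b < a → S a b = 0) →
          ∑ l, S l j * X i l = S j j * X i j := by
        intro S hS
        apply Finset.sum_eq_single j
        · intro l _ hlj
          rcases lt_or_gt_of_ne (fun h : (l : ℕ) = (j : ℕ) => hlj (Fin.ext h)) with hl | hl
          · have hXil : X i l = 0 := by
              have := i.isLt
              exact (IH ((n - 1 - (i : ℕ)) + (l : ℕ)) (by omega) i l (by omega) rfl).1
            rw [hXil, mul_zero]
          · rw [hS l j hl, zero_mul]
        · intro h; exact absurd (Finset.mem_univ j) h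
      have collapseR : ∀ S : Matrix (Fin n) (Fin n) ℂ, (∀ a b : Fin n, b < a → S a b = 0) →
          ∑ k, S i k * Y k j = S i i * Y i j := by
        intro S hS
        apply Finset.sum_eq_single i
        · intro k _ hki
          rcases lt_or_gt_of_ne (fun h : (k : ℕ) = (i : ℕ) => hki (Fin.ext h)) with hk | hk
          · rw [hS i k hk, zero_mul]
          · have hYkj : Y k j = 0 := by
              have := k.isLt
              exact (IH ((n - 1 - (k : ℕ)) + (j : ℕ)) (by omega) k j (by omega) rfl).2
            rw [hYkj, mul_zero]
        · intro h; exact absurd (Finset.mem_univ i) h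
      rw [collapseL T hT, collapseR T hT] at e1
      rw [collapseL R hR, collapseR R hR] at e2
      have hne : j ≠ i := fun h => by
        have : (j : ℕ) = (i : ℕ) := congrArg Fin.val h
        omega
      have hd := hdist j i hne
      have hfac : T j j * R i i - T i i * R j j ≠ 0 := sub_ne_zero.2 hd
      have hx : X i j = 0 := by
        have hz : (T j j * R i i - T i i * R j j) * X i j = 0 := by
          linear_combination R i i * e1 - T i i * e2
        exact (mul_eq_zero.1 hz).resolve_left hfac
      have hy : Y i j = 0 := by
        have h1 : T i i * Y i j = 0 := by rw [← e1, hx, mul_zero]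
        have h2 : R i i * Y i j = 0 := by rw [← e2, hx, mul_zero]
        by_cases hTi : T i i = 0
        · have hRi : R i i ≠ 0 := by
            intro hRi; exact hreg i (by rw [hTi, hRi])
          exact (mul_eq_zero.1 h2).resolve_left hRi
        · exact (mul_eq_zero.1 h1).resolve_left hTi
      exact ⟨hx, hy⟩
  apply hv0
  funext s
  simp only [Pi.zero_apply]
  rcases s with q | q
  · rw [hXv q]
    exact (key ((n - 1 - (q.1.2 : ℕ)) + (q.1.1 : ℕ)) q.1.2 q.1.1 q.2 rfl).1
  · rw [hYv q]
    exact (key ((n - 1 - (q.1.2 : ℕ)) + (q.1.1 : ℕ)) q.1.2 q.1.1 q.2 rfl).2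
end
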